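/- arXiv:2007.14137 — 3 statements merged into one kernel-verified Lean document; each statement's English description precedes it below -/
import Mathlib

section
/- (Eckart–Young–Mirsky for Frobenius norm) Let A ∈ R^{n×N} have singular value decomposition A = Σ_{i=1}^{rank(A)} σ_i u_i v_i^T with σ_1 ≥ σ_2 ≥ ··· > 0. For any r ≤ rank(A), the truncation A_r = Σ_{i=1}^{r} σ_i u_i v_i^T satisfies ‖A − A_r‖_F ≤ ‖A − B‖_F for every matrix B of rank at most r, and ‖A − A_r‖_F² = Σ_{i>r} σ_i². -/
/-!
The residual `A - A_r = ∑_{i ≥ r} σᵢ uᵢ vᵢᵀ` has squared Frobenius norm `∑_{i ≥ r} σᵢ²` by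
orthonormality. If `rank B ≤ r`, let `q₁, …, q_d` (`d ≤ r`) be an orthonormal basis of the column
space of `B`. Column by column, `B` is no closer to `A` than the orthogonal projection onto that
space, so `‖A - B‖² ≥ ‖A‖² - ∑ⱼ ‖Aᵀ qⱼ‖² = ∑ᵢ σᵢ² (1 - cᵢ)` with `cᵢ = ∑ⱼ ⟪qⱼ, uᵢ⟫²`.
Bessel's inequality for each of the two orthonormal families gives `cᵢ ≤ 1` and `∑ᵢ cᵢ ≤ d ≤ r`,
and for nonincreasing `σᵢ²` such weights satisfy `∑ᵢ σᵢ² cᵢ ≤ ∑_{i < r} σᵢ²`.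
-/

open Finset
open scoped RealInnerProductSpace

noncomputable def frob {n N : ℕ} (M : Matrix (Fin n) (Fin N) ℝ) : ℝ :=
  Real.sqrt (∑ a, ∑ b, M a b ^ 2)

lemma frob_sq {n N : ℕ} (M : Matrix (Fin n) (Fin N) ℝ) : frob M ^ 2 = ∑ a, ∑ b, M a b ^ 2 :=
  Real.sq_sqrt (by positivity)

lemma sum_sq_sum_mul_of_orthonormal {ι : Type*} [Fintype ι] {s : Finset ℕ} {e : ℕ → ι → ℝ}
    (he : ∀ i ∈ s, ∀ j ∈ s, ∑ x, e i x * e j x = if i = j then 1 else 0) (w : ℕ → ℝ) :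
    ∑ x, (∑ i ∈ s, w i * e i x) ^ 2 = ∑ i ∈ s, w i ^ 2 := by
  have hexpand : ∀ x, (∑ i ∈ s, w i * e i x) ^ 2
      = ∑ i ∈ s, ∑ j ∈ s, w i * w j * (e i x * e j x) := fun x => by
    rw [sq, sum_mul_sum]
    exact sum_congr rfl fun i _ => sum_congr rfl fun j _ => by ring
  calc ∑ x, (∑ i ∈ s, w i * e i x) ^ 2
      = ∑ i ∈ s, ∑ j ∈ s, w i * w j * ∑ x, e i x * e j x := by
        simp_rw [hexpand, mul_sum]
        rw [sum_comm]
        exact sum_congr rfl fun i _ => sum_comm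
    _ = ∑ i ∈ s, w i ^ 2 := sum_congr rfl fun i hi => by
        rw [sum_eq_single_of_mem i hi fun j hj hji => by
          rw [he i hi j hj, if_neg hji.symm, mul_zero], he i hi i hi, if_pos rfl]
        ring

lemma sum_mul_le_sum_range_of_sum_le {R r : ℕ} (hr : r ≤ R) {f c : ℕ → ℝ}
    (hf0 : ∀ i < R, 0 ≤ f i) (hfmono : ∀ i j, i ≤ j → j < R → f j ≤ f i)
    (hc0 : ∀ i < R, 0 ≤ c i) (hc1 : ∀ i < R, c i ≤ 1)
    (hcsum : ∑ i ∈ range R, c i ≤ r) :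
    ∑ i ∈ range R, f i * c i ≤ ∑ i ∈ range r, f i := by
  obtain rfl | hrR := hr.eq_or_lt
  · exact sum_le_sum fun i hi => by
      have hi := mem_range.1 hi
      nlinarith [hf0 i hi, hc1 i hi]
  -- `f r` separates the head from the tail: `f i ≥ f r` for `i < r` and `f i ≤ f r` for `i ≥ r`.
  set p := f r
  have hhead : ∑ i ∈ range r, f i * c i ≤ ∑ i ∈ range r, (f i + p * (c i - 1)) :=
    sum_le_sum fun i hi => by
      have hi := mem_range.1 hi
      nlinarith [hfmono i r hi.le hrR, hc1 i (hi.trans hrR)]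
  have htail : ∑ i ∈ Ico r R, f i * c i ≤ ∑ i ∈ Ico r R, p * c i :=
    sum_le_sum fun i hi => by
      obtain ⟨hri, hiR⟩ := mem_Ico.1 hi
      exact mul_le_mul_of_nonneg_right (hfmono r i hri hiR) (hc0 i hiR)
  have hsplit : ∀ g : ℕ → ℝ, ∑ i ∈ range R, g i = ∑ i ∈ range r, g i + ∑ i ∈ Ico r R, g i :=
    fun g => (sum_range_add_sum_Ico g hr).symm
  have hp : 0 ≤ p := hf0 r hrR
  rw [hsplit] at hcsum ⊢
  simp only [sum_add_distrib, ← mul_sum, sum_sub_distrib, sum_const, card_range,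
    nsmul_eq_mul, mul_one] at hhead htail
  nlinarith

lemma norm_sq_sub_sum_inner_sq_le {E ι : Type*} [NormedAddCommGroup E] [InnerProductSpace ℝ E]
    [Fintype ι] {K : Submodule ℝ E} (Q : OrthonormalBasis ι ℝ K) (x : E) {y : E} (hy : y ∈ K) :
    ‖x‖ ^ 2 - ∑ j, ⟪(Q j : E), x⟫ ^ 2 ≤ ‖x - y‖ ^ 2 := by
  have : FiniteDimensional ℝ K := Q.toBasis.finiteDimensional_of_finite
  have hproj : ∑ j, ⟪(Q j : E), x⟫ ^ 2 = ‖K.starProjection x‖ ^ 2 := by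
    change _ = ‖K.orthogonalProjectionOnto x‖ ^ 2
    rw [← Q.sum_sq_inner_right]
    simp only [Submodule.inner_orthogonalProjectionOnto_eq_of_mem_left]
  have hmin : ‖x - K.starProjection x‖ ≤ ‖x - y‖ := by
    rw [Submodule.starProjection_minimal]
    exact ciInf_le (f := fun z : K => ‖x - z‖)
      ⟨0, Set.forall_mem_range.2 fun _ => norm_nonneg _⟩ ⟨y, hy⟩
  have hpyth := K.norm_sq_eq_add_norm_sq_starProjection x
  rw [Submodule.starProjection_orthogonal] at hpyth
  simp only [FunLike.coe_sub, Pi.sub_apply, ContinuousLinearMap.id_apply] at hpyth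
  have := pow_le_pow_left₀ (norm_nonneg _) hmin 2
  linarith

lemma sum_mul_sum_inner_sq_le {E ι : Type*} [NormedAddCommGroup E] [InnerProductSpace ℝ E]
    [Fintype ι] {R r : ℕ} (hr : r ≤ R) {U : ℕ → E} (hU : Orthonormal ℝ fun i : Fin R => U i)
    {Q : ι → E} (hQ : Orthonormal ℝ Q) (hcard : Fintype.card ι ≤ r) {f : ℕ → ℝ}
    (hf0 : ∀ i < R, 0 ≤ f i) (hfmono : ∀ i j, i ≤ j → j < R → f j ≤ f i) :
    ∑ i ∈ range R, f i * ∑ j, ⟪Q j, U i⟫ ^ 2 ≤ ∑ i ∈ range r, f i := by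
  refine sum_mul_le_sum_range_of_sum_le hr hf0 hfmono (fun i _ => by positivity)
    (fun i hi => ?_) ?_
  · simpa [hU.1 ⟨i, hi⟩] using hQ.sum_inner_products_le (U i) (s := univ)
  · calc ∑ i ∈ range R, ∑ j, ⟪Q j, U i⟫ ^ 2 = ∑ j, ∑ i : Fin R, ⟪U i, Q j⟫ ^ 2 := by
          rw [sum_comm, sum_congr rfl fun j _ => sum_range fun i => ⟪Q j, U i⟫ ^ 2]
          simp only [real_inner_comm]
      _ ≤ ∑ _j : ι, (1 : ℝ) := sum_le_sum fun j _ => by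
          simpa [hQ.1 j] using hU.sum_inner_products_le (Q j) (s := univ)
      _ ≤ r := by simpa using hcard

def outerSum {m n : Type*} (σ : ℕ → ℝ) (u : ℕ → m → ℝ) (v : ℕ → n → ℝ) (s : Finset ℕ) :
    Matrix m n ℝ :=
  ∑ i ∈ s, σ i • Matrix.of (fun a b => u i a * v i b)

section outerSum

variable {m n : Type*} (σ : ℕ → ℝ) (u : ℕ → m → ℝ) (v : ℕ → n → ℝ)

lemma outerSum_apply (s : Finset ℕ) (a : m) (b : n) :
    outerSum σ u v s a b = ∑ i ∈ s, σ i * (u i a * v i b) := by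
  simp [outerSum, Matrix.sum_apply]

lemma outerSum_range_sub_range {r R : ℕ} (hr : r ≤ R) :
    outerSum σ u v (range R) - outerSum σ u v (range r) = outerSum σ u v (Ico r R) := by
  rw [outerSum, ← sum_range_add_sum_Ico _ hr, outerSum, add_sub_cancel_left, outerSum]

end outerSum

lemma orthonormal_toLp_of_sum_mul {m : Type*} [Fintype m] {R : ℕ} {u : ℕ → m → ℝ}
    (hu : ∀ i < R, ∀ j < R, ∑ a, u i a * u j a = if i = j then 1 else 0) :
    Orthonormal ℝ fun i : Fin R => (WithLp.toLp 2 (u i) : EuclideanSpace ℝ m) := by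
  rw [orthonormal_iff_ite]
  intro i j
  rw [EuclideanSpace.inner_toLp_toLp]
  simp [dotProduct, hu j j.2 i i.2, Fin.val_inj, eq_comm]

section orthonormal

variable {m n : Type*} [Fintype m] [Fintype n] {R : ℕ} (σ : ℕ → ℝ) {u : ℕ → m → ℝ}
  {v : ℕ → n → ℝ}

lemma sum_sq_outerSum {s : Finset ℕ} (hs : s ⊆ range R)
    (hu : ∀ i < R, ∀ j < R, ∑ a, u i a * u j a = if i = j then 1 else 0)
    (hv : ∀ i < R, ∀ j < R, ∑ b, v i b * v j b = if i = j then 1 else 0) :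
    ∑ a, ∑ b, outerSum σ u v s a b ^ 2 = ∑ i ∈ s, σ i ^ 2 := by
  have hv' : ∀ i ∈ s, ∀ j ∈ s, ∑ b, v i b * v j b = if i = j then 1 else 0 :=
    fun i hi j hj => hv i (mem_range.1 (hs hi)) j (mem_range.1 (hs hj))
  calc ∑ a, ∑ b, outerSum σ u v s a b ^ 2
      = ∑ a, ∑ i ∈ s, (σ i * u i a) ^ 2 := by
        refine sum_congr rfl fun a _ => ?_
        rw [← sum_sq_sum_mul_of_orthonormal hv']
        simp only [outerSum_apply, mul_assoc]
    _ = ∑ i ∈ s, σ i ^ 2 * ∑ a, u i a * u i a := by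
        rw [sum_comm]
        exact sum_congr rfl fun i _ => by rw [mul_sum]; exact sum_congr rfl fun a _ => by ring
    _ = ∑ i ∈ s, σ i ^ 2 := by
        refine sum_congr rfl fun i hi => ?_
        rw [hu i (mem_range.1 (hs hi)) i (mem_range.1 (hs hi)), if_pos rfl, mul_one]

lemma sum_sq_inner_col_outerSum
    (hv : ∀ i < R, ∀ j < R, ∑ b, v i b * v j b = if i = j then 1 else 0)
    (q : EuclideanSpace ℝ m) :
    ∑ b, ⟪q, WithLp.toLp 2 ((outerSum σ u v (range R)).col b)⟫ ^ 2
      = ∑ i ∈ range R, σ i ^ 2 * ⟪q, WithLp.toLp 2 (u i)⟫ ^ 2 := by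
  have hcol : ∀ b, ⟪q, WithLp.toLp 2 ((outerSum σ u v (range R)).col b)⟫
      = ∑ i ∈ range R, σ i * ⟪q, WithLp.toLp 2 (u i)⟫ * v i b := fun b => by
    simp only [EuclideanSpace.inner_eq_star_dotProduct, dotProduct, Matrix.col_apply,
      outerSum_apply, Pi.star_apply, star_trivial, sum_mul, mul_sum]
    rw [sum_comm]
    exact sum_congr rfl fun i _ => sum_congr rfl fun a _ => by ring
  simp only [hcol, sum_sq_sum_mul_of_orthonormal
    (fun i hi j hj => hv i (mem_range.1 hi) j (mem_range.1 hj)), mul_pow]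

end orthonormal

lemma sum_Ico_sq_le_sum_sq_outerSum_sub {m n : Type*} [Fintype m] [Fintype n] {R r : ℕ}
    (hr : r ≤ R) {σ : ℕ → ℝ} {u : ℕ → m → ℝ} {v : ℕ → n → ℝ} (hσ0 : ∀ i < R, 0 ≤ σ i)
    (hσmono : ∀ i j, i ≤ j → j < R → σ j ≤ σ i)
    (hu : ∀ i < R, ∀ j < R, ∑ a, u i a * u j a = if i = j then 1 else 0)
    (hv : ∀ i < R, ∀ j < R, ∑ b, v i b * v j b = if i = j then 1 else 0)
    {B : Matrix m n ℝ} (hB : B.rank ≤ r) :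
    ∑ i ∈ Ico r R, σ i ^ 2 ≤ ∑ a, ∑ b, (outerSum σ u v (range R) - B) a b ^ 2 := by
  set A := outerSum σ u v (range R)
  let x : n → EuclideanSpace ℝ m := fun b => WithLp.toLp 2 (A.col b)
  let K : Submodule ℝ (EuclideanSpace ℝ m) :=
    (Submodule.span ℝ (Set.range B.col)).map
      ((WithLp.linearEquiv 2 ℝ (m → ℝ)).symm : (m → ℝ) →ₗ[ℝ] EuclideanSpace ℝ m)
  have hK : Module.finrank ℝ K ≤ r := by
    rwa [LinearEquiv.finrank_map_eq, ← Matrix.rank_eq_finrank_span_cols]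
  let Q := stdOrthonormalBasis ℝ K
  have hcol : ∀ b, ‖x b‖ ^ 2 - ∑ j, ⟪(Q j : EuclideanSpace ℝ m), x b⟫ ^ 2
      ≤ ∑ a, (A - B) a b ^ 2 := fun b => by
    have hy : WithLp.toLp 2 (B.col b) ∈ K :=
      Submodule.mem_map_of_mem (Submodule.subset_span ⟨b, rfl⟩)
    simpa [x, EuclideanSpace.real_norm_sq_eq] using norm_sq_sub_sum_inner_sq_le Q (x b) hy
  have hnorm : ∑ b, ‖x b‖ ^ 2 = ∑ i ∈ range R, σ i ^ 2 := by
    simp only [x, EuclideanSpace.real_norm_sq_eq, Matrix.col_apply]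
    rw [sum_comm]
    exact sum_sq_outerSum σ subset_rfl hu hv
  have hproj : ∑ b, ∑ j, ⟪(Q j : EuclideanSpace ℝ m), x b⟫ ^ 2
      ≤ ∑ i ∈ range r, σ i ^ 2 := by
    rw [sum_comm]
    simp only [x, A, sum_sq_inner_col_outerSum σ hv]
    rw [sum_comm]
    simp only [← mul_sum]
    exact sum_mul_sum_inner_sq_le hr (orthonormal_toLp_of_sum_mul hu)
      (Q.orthonormal.comp_linearIsometry K.subtypeₗᵢ) (by simpa using hK)
      (fun i _ => sq_nonneg _)
      (fun i j hij hj => pow_le_pow_left₀ (hσ0 j hj) (hσmono i j hij hj) 2)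
  have hsplit := sum_range_add_sum_Ico (fun i => σ i ^ 2) hr
  have hcols := sum_le_sum fun b (_ : b ∈ univ) => hcol b
  rw [sum_sub_distrib, hnorm] at hcols
  rw [sum_comm]
  linarith

theorem stmt_6_general (n N R : ℕ) (A : Matrix (Fin n) (Fin N) ℝ)
    (σ : ℕ → ℝ) (u : ℕ → Fin n → ℝ) (v : ℕ → Fin N → ℝ)
    (hσpos : ∀ i < R, 0 < σ i)
    (hσmono : ∀ i j, i ≤ j → j < R → σ j ≤ σ i)
    (hu : ∀ i < R, ∀ j < R, ∑ a, u i a * u j a = if i = j then 1 else 0)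
    (hv : ∀ i < R, ∀ j < R, ∑ b, v i b * v j b = if i = j then 1 else 0)
    (hA : A = ∑ i ∈ Finset.range R, σ i • Matrix.of (fun a b => u i a * v i b))
    (r : ℕ) (hr : r ≤ R) :
    (∀ B : Matrix (Fin n) (Fin N) ℝ, B.rank ≤ r →
      frob (A - ∑ i ∈ Finset.range r, σ i • Matrix.of (fun a b => u i a * v i b)) ≤
        frob (A - B)) ∧
    (frob (A - ∑ i ∈ Finset.range r, σ i • Matrix.of (fun a b => u i a * v i b))) ^ 2 =
      ∑ i ∈ Finset.Ico r R, σ i ^ 2 := by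
  change A = outerSum σ u v (range R) at hA
  have hresidual : ∑ a, ∑ b, (A - outerSum σ u v (range r)) a b ^ 2 = ∑ i ∈ Ico r R, σ i ^ 2 := by
    rw [hA, outerSum_range_sub_range σ u v hr]
    exact sum_sq_outerSum σ (fun i hi => mem_range.2 (mem_Ico.1 hi).2) hu hv
  refine ⟨fun B hB => ?_, (frob_sq _).trans hresidual⟩
  have hoptimal := sum_Ico_sq_le_sum_sq_outerSum_sub hr (fun i hi => (hσpos i hi).le)
    hσmono hu hv hB
  rw [← hA, ← hresidual] at hoptimal
  exact Real.sqrt_le_sqrt hoptimal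

/-- Eckart–Young–Mirsky (Frobenius norm).  If `A = ∑_{i<R} σᵢ uᵢ vᵢᵀ` is a
singular value decomposition of `A` (with `R = rank A`, nonincreasing positive
singular values `σ` and orthonormal families `u`, `v`), then for every `r ≤ R`
the truncation `A_r = ∑_{i<r} σᵢ uᵢ vᵢᵀ` satisfies `‖A − A_r‖_F ≤ ‖A − B‖_F`
for every matrix `B` of rank at most `r`, and `‖A − A_r‖_F² = ∑_{i ≥ r} σᵢ²`. -/
theorem stmt_6 (n N R : ℕ) (A : Matrix (Fin n) (Fin N) ℝ)
    (σ : ℕ → ℝ) (u : ℕ → Fin n → ℝ) (v : ℕ → Fin N → ℝ)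
    (hrank : A.rank = R)
    (hσpos : ∀ i < R, 0 < σ i)
    (hσmono : ∀ i j, i ≤ j → j < R → σ j ≤ σ i)
    (hu : ∀ i < R, ∀ j < R, ∑ a, u i a * u j a = if i = j then 1 else 0)
    (hv : ∀ i < R, ∀ j < R, ∑ b, v i b * v j b = if i = j then 1 else 0)
    (hA : A = ∑ i ∈ Finset.range R, σ i • Matrix.of (fun a b => u i a * v i b))
    (r : ℕ) (hr : r ≤ R) :
    (∀ B : Matrix (Fin n) (Fin N) ℝ, B.rank ≤ r →
      frob (A - ∑ i ∈ Finset.range r, σ i • Matrix.of (fun a b => u i a * v i b)) ≤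
        frob (A - B)) ∧
    (frob (A - ∑ i ∈ Finset.range r, σ i • Matrix.of (fun a b => u i a * v i b))) ^ 2 =
      ∑ i ∈ Finset.Ico r R, σ i ^ 2 :=
  stmt_6_general n N R A σ u v hσpos hσmono hu hv hA r hr
end

section
/- Let f: R^n → [0, ∞) satisfy the Łojasiewicz-type inequality |f(x)|^θ ≤ c'·dist(0, ∂̂f(x)) near a point x* with f(x*) = 0, for some exponent θ ∈ (1/2, 1) and constant c' > 0. Suppose y⁺ ∈ Ω1 is a projection of z onto Ω1, z⁺ ∈ Ω2 is a projection of y⁺ onto Ω2, f = δ_{Ω1} + (1/2)d_{Ω2}², and α is the angle between z − y⁺ and z⁺ − y⁺ with α ≤ π/2. Then (1 − cos α)/‖y⁺ − z⁺‖^{4θ−2} ≥ 2^{−2θ−1}c² where c = 1/c'. -/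
open Metric

/-!
The Łojasiewicz inequality at `y⁺` bounds `((1/2)‖y⁺ − z⁺‖²)^θ` by `c'` times the norm of every
subgradient `λ(z − y⁺) − (z⁺ − y⁺)`, `λ ≥ 0`. Projecting `z⁺ − y⁺` onto the ray spanned by
`z − y⁺` (possible with `λ ≥ 0` because `α ≤ π/2`) gives a subgradient of norm `‖y⁺ − z⁺‖ sin α`.
Squaring and using `sin² α ≤ 2(1 − cos α)` turns this into the bound on `1 − cos α`.
-/

open InnerProductGeometry

theorem Real.sin_sq_le_two_mul_one_sub_cos (x : ℝ) : Real.sin x ^ 2 ≤ 2 * (1 - Real.cos x) := by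
  nlinarith [Real.sin_sq_add_cos_sq x, sq_nonneg (1 - Real.cos x)]

section InnerProduct

variable {E : Type*} [NormedAddCommGroup E] [InnerProductSpace ℝ E]

theorem exists_nonneg_norm_smul_sub_eq_norm_mul_sin_angle {u w : E}
    (hcos : 0 ≤ Real.cos (angle u w)) :
    ∃ l : ℝ, 0 ≤ l ∧ ‖l • u - w‖ = ‖w‖ * Real.sin (angle u w) := by
  set c := Real.cos (angle u w)
  -- `c‖w‖/‖u‖ = ⟪u, w⟫/‖u‖²`; for `u = 0` it is the junk value `0`, and then `angle u w = π/2`.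
  refine ⟨c * ‖w‖ / ‖u‖, by positivity, ?_⟩
  have hinner : inner ℝ u w = c * (‖u‖ * ‖w‖) := (cos_angle_mul_norm_mul_norm u w).symm
  have hsq : ‖(c * ‖w‖ / ‖u‖) • u - w‖ ^ 2 = (‖w‖ * Real.sin (angle u w)) ^ 2 := by
    rw [norm_sub_sq_real, norm_smul, real_inner_smul_left, hinner, Real.norm_eq_abs,
      abs_of_nonneg (by positivity), mul_pow, mul_pow, Real.sin_sq]
    rcases eq_or_ne ‖u‖ 0 with hu | hu
    · simp [c, norm_eq_zero.mp hu]
    · field_simp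
      ring
  exact (pow_left_inj₀ (norm_nonneg _)
    (mul_nonneg (norm_nonneg _) (sin_angle_nonneg u w)) two_ne_zero).mp hsq

end InnerProduct

theorem rpow_half_mul_sq_sq {n : ℝ} (hn : 0 < n) (θ : ℝ) :
    (((1 / 2) * n ^ 2) ^ θ) ^ 2 = (2 : ℝ) ^ (-(2 * θ) - 1) * n ^ (4 * θ - 2) * (2 * n ^ 2) := by
  rw [← Real.rpow_natCast _ 2, ← Real.rpow_mul (by positivity),
    Real.mul_rpow (by norm_num) (by positivity), ← Real.rpow_natCast n 2,
    ← Real.rpow_mul hn.le, Real.rpow_sub two_pos, Real.rpow_sub hn, one_div,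
    Real.inv_rpow zero_le_two, ← Real.rpow_neg zero_le_two]
  field_simp
  ring_nf

theorem two_rpow_mul_inv_sq_le_one_sub_cos_div_rpow {n θ c' α : ℝ} (hn : 0 < n) (hc' : 0 < c')
    (h : ((1 / 2) * n ^ 2) ^ θ ≤ c' * (n * Real.sin α)) :
    (2 : ℝ) ^ (-(2 * θ) - 1) * (1 / c') ^ 2 ≤ (1 - Real.cos α) / n ^ (4 * θ - 2) := by
  have hsq : (((1 / 2) * n ^ 2) ^ θ) ^ 2 ≤ c' ^ 2 * (2 * (1 - Real.cos α)) * n ^ 2 :=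
    calc (((1 / 2) * n ^ 2) ^ θ) ^ 2 ≤ (c' * (n * Real.sin α)) ^ 2 :=
          pow_le_pow_left₀ (by positivity) h 2
      _ = c' ^ 2 * Real.sin α ^ 2 * n ^ 2 := by ring
      _ ≤ c' ^ 2 * (2 * (1 - Real.cos α)) * n ^ 2 := by
          gcongr
          exact Real.sin_sq_le_two_mul_one_sub_cos α
  rw [rpow_half_mul_sq_sq hn] at hsq
  have hkey : (2 : ℝ) ^ (-(2 * θ) - 1) * n ^ (4 * θ - 2) ≤ c' ^ 2 * (1 - Real.cos α) := by
    nlinarith [pow_pos hn 2]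
  rw [le_div_iff₀ (Real.rpow_pos_of_pos hn _), div_pow, one_pow, mul_right_comm,
    ← mul_div_assoc, mul_one, div_le_iff₀ (by positivity)]
  linarith

theorem stmt_15_general {E : Type*} [NormedAddCommGroup E] [InnerProductSpace ℝ E]
    (z yplus zplus : E)
    (θ c' : ℝ) (hc' : 0 < c')
    (hne : yplus ≠ zplus)
    (hKL : ∀ l : ℝ, 0 ≤ l →
      ((1 / 2) * ‖yplus - zplus‖ ^ 2) ^ θ ≤
        c' * ‖l • (z - yplus) + (yplus - zplus)‖) :
    let cosα : ℝ :=
      inner ℝ (z - yplus) (zplus - yplus) / (‖z - yplus‖ * ‖zplus - yplus‖)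
    0 ≤ cosα →
      (1 - cosα) / ‖yplus - zplus‖ ^ (4 * θ - 2) ≥
        (2 : ℝ) ^ (-(2 * θ) - 1) * (1 / c') ^ 2 := by
  intro cosα hcos
  rw [show cosα = Real.cos (angle (z - yplus) (zplus - yplus)) from (cos_angle _ _).symm] at hcos ⊢
  obtain ⟨l, hl, hnorm⟩ := exists_nonneg_norm_smul_sub_eq_norm_mul_sin_angle hcos
  have hKLl := hKL l hl
  rw [show l • (z - yplus) + (yplus - zplus) = l • (z - yplus) - (zplus - yplus) by abel,
    hnorm, norm_sub_rev zplus] at hKLl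
  exact two_rpow_mul_inv_sq_le_one_sub_cos_div_rpow (norm_pos_iff.mpr (sub_ne_zero.mpr hne)) hc'
    hKLl

/-- Separable-intersection bound obtained from the Łojasiewicz inequality for
`f = δ_{Ω₁} + (1/2) d_{Ω₂}²`.  Suppose `y⁺ ∈ Ω₁` is a metric projection of `z`
onto `Ω₁` and `z⁺ ∈ Ω₂` is a metric projection of `y⁺` onto `Ω₂` with
`y⁺ ≠ z⁺`.  The subgradients of `f` at `y⁺` have the form
`λ(z − y⁺) + (y⁺ − z⁺)` for `λ ≥ 0`, and `f(y⁺) = (1/2)‖y⁺ − z⁺‖²`; the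
Łojasiewicz-type inequality `|f(y⁺)|^θ ≤ c' · dist(0, ∂̂f(y⁺))` reads
`((1/2)‖y⁺ − z⁺‖²)^θ ≤ c' ‖λ(z − y⁺) + (y⁺ − z⁺)‖` for all `λ ≥ 0`.
If the angle `α` between `z − y⁺` and `z⁺ − y⁺` satisfies `α ≤ π/2`
(i.e. `cos α ≥ 0`), then `(1 − cos α)/‖y⁺ − z⁺‖^{4θ−2} ≥ 2^{−2θ−1} c²`,
where `c = 1/c'`. -/
theorem stmt_15 {E : Type*} [NormedAddCommGroup E] [InnerProductSpace ℝ E]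
    (Ω₁ Ω₂ : Set E) (z yplus zplus : E)
    (θ c' : ℝ) (hθ : θ ∈ Set.Ioo (1/2 : ℝ) 1) (hc' : 0 < c')
    (hy : yplus ∈ Ω₁) (hyproj : dist z yplus = infDist z Ω₁)
    (hz : zplus ∈ Ω₂) (hzproj : dist yplus zplus = infDist yplus Ω₂)
    (hne : yplus ≠ zplus)
    (hKL : ∀ l : ℝ, 0 ≤ l →
      ((1 / 2) * ‖yplus - zplus‖ ^ 2) ^ θ ≤
        c' * ‖l • (z - yplus) + (yplus - zplus)‖) :
    let cosα : ℝ :=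
      inner ℝ (z - yplus) (zplus - yplus) / (‖z - yplus‖ * ‖zplus - yplus‖)
    0 ≤ cosα →
      (1 - cosα) / ‖yplus - zplus‖ ^ (4 * θ - 2) ≥
        (2 : ℝ) ^ (-(2 * θ) - 1) * (1 / c') ^ 2 :=
  stmt_15_general z yplus zplus θ c' hc' hne hKL
end

section
/- For an n×N real matrix A, the function B ↦ ‖A − B‖_F² restricted to the smooth manifold M_r = {B : rank(B) = r} has a critical point at every truncation Σ_{i∈S} σ_i u_i v_i^T formed from any r-element subset S of indices of distinct nonzero singular values of A; among these, the global minimizer over the closure of M_r is attained at S = {1,...,r} (the r largest singular values). -/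
open Finset Matrix

/-!
Critical points: let `γ` be a curve of rank-`r` matrices through `X_S` and `j ∉ S`. The
`(r+1) × (r+1)` compressions `(u_k ⬝ γ(t) v_l)` with `k, l ∈ S ∪ {j}` have rank `≤ r`, hence
determinant `0`, and at `t = 0` the compression is `diag(σ_S, 0)`. Differentiating the Leibniz
formula at this diagonal matrix leaves `(∏_{i ∈ S} σ_i) · u_jᵀ γ'(0) v_j`, so `γ'(0)` is
Frobenius-orthogonal to every `u_j v_jᵀ` with `j ∉ S`, hence to `A - X_S`, which is (up to a
factor `-2`) the gradient of the residual at `X_S`.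

Eckart–Young: let `K = ker B`. Projecting the rows of `A - B` onto `K` kills `B`, so
`‖A - B‖² ≥ ∑ σ_i² ‖P_K v_i‖² = ∑ σ_i² (1 - q_i)` with `q_i = ‖P_{K⊥} v_i‖² ∈ [0, 1]` and, by
Bessel's inequality in `K⊥`, `∑ q_i ≤ dim K⊥ = rank B ≤ r`. Under these constraints `∑ σ_i² q_i`
is at most the sum of the `r` largest `σ_i²`, which leaves `∑_{i ≥ r} σ_i²`.
-/

theorem hasDerivAt_det_of_eq_diagonal {ι : Type*} [Fintype ι] [DecidableEq ι]
    {M : ℝ → Matrix ι ι ℝ} {M' : Matrix ι ι ℝ} {t₀ : ℝ} {w : ι → ℝ}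
    (hM : ∀ i j, HasDerivAt (fun t => M t i j) (M' i j) t₀) (h₀ : M t₀ = diagonal w) :
    HasDerivAt (fun t => (M t).det) (∑ k, (∏ l ∈ univ.erase k, w l) * M' k k) t₀ := by
  have hLeibniz := HasDerivAt.fun_sum (u := univ) fun (π : Equiv.Perm ι) _ =>
    (HasDerivAt.fun_finsetProd (u := univ) fun l _ => hM (π l) l).const_mul
      ((Equiv.Perm.sign π : ℤ) : ℝ)
  simp only [← det_apply'] at hLeibniz
  refine hLeibniz.congr_deriv ?_
  rw [sum_eq_single (1 : Equiv.Perm ι)]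
  · simp [h₀]
  · intro π _ hπ
    -- a non-identity permutation moves two points, so every term meets an off-diagonal entry
    suffices ∀ k, ∏ l ∈ univ.erase k, M t₀ (π l) l = 0 by simp [this]
    intro k
    obtain ⟨l, hl, hlk⟩ := exists_mem_ne (Equiv.Perm.two_le_card_support_of_ne_one hπ) k
    refine prod_eq_zero (mem_erase.mpr ⟨hlk, mem_univ l⟩) ?_
    rw [h₀, diagonal_apply_ne _ (Equiv.Perm.mem_support.mp hl)]
  · simp

theorem diag_eq_zero_of_hasDerivAt_of_det_eq_zero {ι : Type*} [Fintype ι] [DecidableEq ι]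
    {M : ℝ → Matrix ι ι ℝ} {M' : Matrix ι ι ℝ} {t₀ : ℝ} {w : ι → ℝ} {k : ι}
    (hM : ∀ i j, HasDerivAt (fun t => M t i j) (M' i j) t₀) (hdet : ∀ t, (M t).det = 0)
    (h₀ : M t₀ = diagonal w) (hw : ∀ l ≠ k, w l ≠ 0) : M' k k = 0 := by
  have hwk : w k = 0 := by
    have := hdet t₀
    rw [h₀, det_diagonal, prod_eq_zero_iff] at this
    obtain ⟨l, -, hl⟩ := this
    by_contra hk
    exact hw l (fun h => hk (h ▸ hl)) hl
  have hderiv := (hasDerivAt_det_of_eq_diagonal hM h₀).unique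
    (by simpa only [hdet] using hasDerivAt_const t₀ (0 : ℝ))
  rw [sum_eq_single k (fun k' _ hk' => by
    rw [prod_eq_zero (mem_erase.mpr ⟨Ne.symm hk', mem_univ k⟩) hwk, zero_mul]) (by simp)] at hderiv
  exact (mul_eq_zero.mp hderiv).resolve_left
    (prod_ne_zero_iff.mpr fun l hl => hw l (ne_of_mem_erase hl))

section

variable {m p : Type*}

theorem dotProduct_sum_smul_of_orthonormal [Fintype m] {R : ℕ} {u : ℕ → m → ℝ}
    (hu : ∀ i < R, ∀ j < R, u i ⬝ᵥ u j = if i = j then 1 else 0) {T : Finset ℕ}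
    (hT : T ⊆ range R) (c : ℕ → ℝ) {k : ℕ} (hk : k < R) :
    u k ⬝ᵥ ∑ i ∈ T, c i • u i = if k ∈ T then c k else 0 := by
  rw [dotProduct_sum, ← sum_ite_eq T k c]
  refine sum_congr rfl fun i hi => ?_
  rw [dotProduct_smul, hu k hk i (mem_range.mp (hT hi)), smul_eq_mul, mul_ite, mul_one, mul_zero]

theorem dotProduct_mulVec_sum_smul_vecMulVec [Fintype m] [Fintype p] {R : ℕ} {u : ℕ → m → ℝ}
    {v : ℕ → p → ℝ}
    (hu : ∀ i < R, ∀ j < R, u i ⬝ᵥ u j = if i = j then 1 else 0)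
    (hv : ∀ i < R, ∀ j < R, v i ⬝ᵥ v j = if i = j then 1 else 0) {T : Finset ℕ}
    (hT : T ⊆ range R) (σ : ℕ → ℝ) {k l : ℕ} (hk : k < R) (hl : l < R) :
    u k ⬝ᵥ (∑ i ∈ T, σ i • vecMulVec (u i) (v i)) *ᵥ v l
      = if k = l then (if k ∈ T then σ k else 0) else 0 := by
  have hcol : (∑ i ∈ T, σ i • vecMulVec (u i) (v i)) *ᵥ v l
      = ∑ i ∈ T, (σ i * if i = l then 1 else 0) • u i := by
    rw [sum_mulVec]
    refine sum_congr rfl fun i hi => ?_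
    rw [smul_mulVec, vecMulVec_mulVec, op_smul_eq_smul, hv i (mem_range.mp (hT hi)) l hl,
      smul_smul]
  rw [hcol, dotProduct_sum_smul_of_orthonormal hu hT _ hk]
  split_ifs <;> simp_all

theorem rank_of_dotProduct_mulVec_le [Fintype m] [Fintype p] {ι : Type*} [Fintype ι]
    (x : ι → m → ℝ) (y : ι → p → ℝ) (X : Matrix m p ℝ) :
    (of fun k l => x k ⬝ᵥ X *ᵥ y l).rank ≤ X.rank := by
  have hfac : (of fun k l => x k ⬝ᵥ X *ᵥ y l) = of x * X * (of y)ᵀ := by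
    ext k l
    simp only [of_apply, mul_apply, transpose_apply, dotProduct, mulVec, mul_sum, sum_mul]
    rw [sum_comm]
    exact sum_congr rfl fun _ _ => sum_congr rfl fun _ _ => by ring
  rw [hfac]
  exact (rank_mul_le_left _ _).trans (rank_mul_le_right _ _)

theorem HasDerivAt.dotProduct_mulVec [Fintype m] [Fintype p] {x : m → ℝ} {y : p → ℝ}
    {γ : ℝ → Matrix m p ℝ} {d : Matrix m p ℝ} {t₀ : ℝ}
    (hd : ∀ a b, HasDerivAt (fun t => γ t a b) (d a b) t₀) :
    HasDerivAt (fun t => x ⬝ᵥ γ t *ᵥ y) (x ⬝ᵥ d *ᵥ y) t₀ :=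
  HasDerivAt.fun_sum fun a _ =>
    (HasDerivAt.fun_sum fun b _ => (hd a b).mul_const (y b)).const_mul (x a)

theorem dotProduct_mulVec_eq_zero_of_rank_le [Fintype m] [Fintype p] {R : ℕ} {σ : ℕ → ℝ}
    {u : ℕ → m → ℝ} {v : ℕ → p → ℝ} {S : Finset ℕ}
    (hu : ∀ i < R, ∀ j < R, u i ⬝ᵥ u j = if i = j then 1 else 0)
    (hv : ∀ i < R, ∀ j < R, v i ⬝ᵥ v j = if i = j then 1 else 0)
    (hS : S ⊆ range R) (hσ : ∀ i ∈ S, σ i ≠ 0)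
    {γ : ℝ → Matrix m p ℝ} {d : Matrix m p ℝ} {t₀ : ℝ}
    (hd : ∀ a b, HasDerivAt (fun t => γ t a b) (d a b) t₀)
    (hγ₀ : γ t₀ = ∑ i ∈ S, σ i • vecMulVec (u i) (v i)) (hrank : ∀ t, (γ t).rank ≤ S.card)
    {j : ℕ} (hj : j < R) (hjS : j ∉ S) : u j ⬝ᵥ d *ᵥ v j = 0 := by
  classical
  let M : ℝ → Matrix ↥(insert j S) ↥(insert j S) ℝ := fun t => of fun k l => u k ⬝ᵥ γ t *ᵥ v l
  have hlt : ∀ k : (insert j S : Finset ℕ), (k : ℕ) < R := fun k =>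
    mem_range.mp (insert_subset (mem_range.mpr hj) hS k.2)
  have hdet : ∀ t, (M t).det = 0 := fun t => by
    by_contra h
    have := (rank_of_det_ne_zero h).symm.trans_le
      ((rank_of_dotProduct_mulVec_le _ _ _).trans (hrank t))
    rw [Fintype.card_coe, card_insert_of_notMem hjS] at this
    omega
  have hM₀ : M t₀ = diagonal fun k : ↥(insert j S) => if (k : ℕ) ∈ S then σ k else 0 := by
    ext k l
    simp only [M, of_apply, hγ₀, dotProduct_mulVec_sum_smul_vecMulVec hu hv hS σ (hlt k) (hlt l),
      diagonal_apply, Subtype.ext_iff]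
  exact diag_eq_zero_of_hasDerivAt_of_det_eq_zero (M := M) (k := ⟨j, mem_insert_self j S⟩)
    (fun k l => HasDerivAt.dotProduct_mulVec hd) hdet hM₀ fun l hl => by
      have hlS : (l : ℕ) ∈ S := (mem_insert.mp l.2).resolve_left fun h => hl (Subtype.ext h)
      simpa [hlS] using hσ l hlS

theorem sum_sum_sum_smul_vecMulVec_mul [Fintype m] [Fintype p] (T : Finset ℕ) (c : ℕ → ℝ)
    (x : ℕ → m → ℝ) (y : ℕ → p → ℝ) (D : Matrix m p ℝ) :
    ∑ a, ∑ b, (∑ i ∈ T, c i • vecMulVec (x i) (y i)) a b * D a b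
      = ∑ i ∈ T, c i * (x i ⬝ᵥ D *ᵥ y i) := by
  simp only [Matrix.sum_apply, Matrix.smul_apply, vecMulVec_apply, smul_eq_mul, dotProduct,
    mulVec, sum_mul, mul_sum]
  rw [sum_congr rfl fun a _ => sum_comm, sum_comm]
  exact sum_congr rfl fun _ _ => sum_congr rfl fun _ _ => sum_congr rfl fun _ _ => by ring

theorem hasDerivAt_residual_of_rank_le [Fintype m] [Fintype p] {R : ℕ} {σ : ℕ → ℝ}
    {u : ℕ → m → ℝ} {v : ℕ → p → ℝ} {S : Finset ℕ} {A : Matrix m p ℝ}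
    (hu : ∀ i < R, ∀ j < R, u i ⬝ᵥ u j = if i = j then 1 else 0)
    (hv : ∀ i < R, ∀ j < R, v i ⬝ᵥ v j = if i = j then 1 else 0)
    (hA : A = ∑ i ∈ range R, σ i • vecMulVec (u i) (v i))
    (hS : S ⊆ range R) (hσ : ∀ i ∈ S, σ i ≠ 0)
    {γ : ℝ → Matrix m p ℝ} {d : Matrix m p ℝ} {t₀ : ℝ}
    (hd : ∀ a b, HasDerivAt (fun t => γ t a b) (d a b) t₀)
    (hγ₀ : γ t₀ = ∑ i ∈ S, σ i • vecMulVec (u i) (v i)) (hrank : ∀ t, (γ t).rank ≤ S.card) :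
    HasDerivAt (fun t => ∑ a, ∑ b, (A a b - γ t a b) ^ 2) 0 t₀ := by
  have hsub : A - γ t₀ = ∑ i ∈ range R \ S, σ i • vecMulVec (u i) (v i) := by
    rw [hA, hγ₀, ← sum_sdiff hS, add_sub_cancel_right]
  refine (HasDerivAt.fun_sum fun a _ => HasDerivAt.fun_sum fun b _ =>
    ((hd a b).const_sub (A a b)).pow 2).congr_deriv ?_
  calc ∑ a, ∑ b, ((2 : ℕ) : ℝ) * (A a b - γ t₀ a b) ^ (2 - 1) * -d a b
      = -2 * ∑ a, ∑ b, (A - γ t₀) a b * d a b := by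
        simp only [mul_sum, Matrix.sub_apply]
        exact sum_congr rfl fun _ _ => sum_congr rfl fun _ _ => by ring
    _ = 0 := by
        rw [hsub, sum_sum_sum_smul_vecMulVec_mul, sum_eq_zero, mul_zero]
        intro i hi
        obtain ⟨hiR, hiS⟩ := mem_sdiff.mp hi
        rw [dotProduct_mulVec_eq_zero_of_rank_le hu hv hS hσ hd hγ₀ hrank (mem_range.mp hiR) hiS,
          mul_zero]

theorem sum_sum_sq_eq_sum_norm_sq_toLp [Fintype m] [Fintype p] (M : Matrix m p ℝ) :
    ∑ a, ∑ b, M a b ^ 2 = ∑ a, ‖WithLp.toLp 2 (M a)‖ ^ 2 := by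
  simp only [EuclideanSpace.real_norm_sq_eq]

theorem toLp_sum_smul_vecMulVec_apply (T : Finset ℕ) (c : ℕ → ℝ) (x : ℕ → m → ℝ)
    (y : ℕ → p → ℝ) (a : m) :
    WithLp.toLp 2 ((∑ i ∈ T, c i • vecMulVec (x i) (y i)) a)
      = ∑ i ∈ T, (c i * x i a) • WithLp.toLp 2 (y i) := by
  ext b
  simp [Matrix.sum_apply, vecMulVec_apply, mul_assoc]

theorem sum_norm_sq_sum_smul_of_orthonormal {E : Type*} [Fintype m] [NormedAddCommGroup E]
    [InnerProductSpace ℝ E] {R : ℕ} {u : ℕ → m → ℝ}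
    (hu : ∀ i < R, ∀ j < R, u i ⬝ᵥ u j = if i = j then 1 else 0) {T : Finset ℕ}
    (hT : T ⊆ range R) (c : ℕ → ℝ) (y : ℕ → E) :
    ∑ a, ‖∑ i ∈ T, (c i * u i a) • y i‖ ^ 2 = ∑ i ∈ T, c i ^ 2 * ‖y i‖ ^ 2 := by
  have hexpand : ∀ a, ‖∑ i ∈ T, (c i * u i a) • y i‖ ^ 2
      = ∑ i ∈ T, ∑ j ∈ T, (c i * c j * inner ℝ (y i) (y j)) * (u i a * u j a) := fun a => by
    simp only [← real_inner_self_eq_norm_sq, sum_inner, inner_sum, real_inner_smul_left,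
      real_inner_smul_right]
    exact sum_congr rfl fun _ _ => sum_congr rfl fun _ _ => by rw [real_inner_comm]; ring
  simp only [hexpand]
  rw [sum_comm]
  refine sum_congr rfl fun i hi => ?_
  rw [sum_comm]
  simp only [← mul_sum]
  calc ∑ j ∈ T, c i * c j * inner ℝ (y i) (y j) * (u i ⬝ᵥ u j)
      = ∑ j ∈ T, if i = j then c i * c j * inner ℝ (y i) (y j) else 0 :=
        sum_congr rfl fun j hj => by
          rw [hu i (mem_range.mp (hT hi)) j (mem_range.mp (hT hj)), mul_ite, mul_one, mul_zero]
    _ = c i ^ 2 * ‖y i‖ ^ 2 := by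
        rw [sum_ite_eq, if_pos hi, real_inner_self_eq_norm_sq, sq (c i)]

theorem Orthonormal.sum_norm_sq_starProjection_le_finrank {E : Type*} [NormedAddCommGroup E]
    [InnerProductSpace ℝ E] (W : Submodule ℝ E) [FiniteDimensional ℝ W] {κ : Type*} [Fintype κ]
    {v : κ → E} (hv : Orthonormal ℝ v) :
    ∑ i, ‖W.starProjection (v i)‖ ^ 2 ≤ Module.finrank ℝ W := by
  let b := stdOrthonormalBasis ℝ W
  have hparseval : ∀ x : E, ‖W.starProjection x‖ ^ 2 = ∑ k, inner ℝ x (b k : E) ^ 2 := fun x => by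
    show ‖W.orthogonalProjectionOnto x‖ ^ 2 = _
    rw [← b.sum_sq_inner_right]
    simp only [Submodule.inner_orthogonalProjectionOnto_eq_of_mem_left, real_inner_comm]
  calc ∑ i, ‖W.starProjection (v i)‖ ^ 2 = ∑ k, ∑ i, ‖inner ℝ (v i) (b k : E)‖ ^ 2 := by
        simp only [hparseval, Real.norm_eq_abs, sq_abs]
        exact sum_comm
    _ ≤ ∑ k, ‖(b k : E)‖ ^ 2 := sum_le_sum fun k _ => Orthonormal.sum_inner_products_le _ hv
    _ = Module.finrank ℝ W := by
        simp only [fun k => show ‖(b k : E)‖ = 1 from b.norm_eq_one k]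
        simp

theorem sum_mul_le_sum_range_of_antitone {R r : ℕ} (hrR : r ≤ R) {w q : ℕ → ℝ}
    (hw : ∀ i j, i ≤ j → j < R → w j ≤ w i) (hw0 : ∀ i, 0 ≤ w i) (hq0 : ∀ i, 0 ≤ q i)
    (hq1 : ∀ i < r, q i ≤ 1) (hqsum : ∑ i ∈ range R, q i ≤ r) :
    ∑ i ∈ range R, w i * q i ≤ ∑ i ∈ range r, w i := by
  -- `c` separates the `r` largest weights from the others
  obtain ⟨c, hc0, hlo, hhi⟩ : ∃ c, 0 ≤ c ∧ (∀ i < r, c ≤ w i) ∧ ∀ i ∈ Ico r R, w i ≤ c := by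
    rcases hrR.lt_or_eq with h | rfl
    · exact ⟨w r, hw0 r, fun i hi => hw i r hi.le h,
        fun i hi => hw r i (mem_Ico.1 hi).1 (mem_Ico.1 hi).2⟩
    · exact ⟨0, le_rfl, fun i _ => hw0 i, fun i hi => by simp at hi⟩
  have hhead : ∑ i ∈ range r, w i * q i ≤ ∑ i ∈ range r, (w i + c * (q i - 1)) :=
    sum_le_sum fun i hi => by nlinarith [hlo i (mem_range.1 hi), hq1 i (mem_range.1 hi)]
  have htail : ∑ i ∈ Ico r R, w i * q i ≤ ∑ i ∈ Ico r R, c * q i :=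
    sum_le_sum fun i hi => mul_le_mul_of_nonneg_right (hhi i hi) (hq0 i)
  rw [← sum_range_add_sum_Ico _ hrR]
  rw [← sum_range_add_sum_Ico _ hrR] at hqsum
  simp only [sum_add_distrib, ← mul_sum, sum_sub_distrib, sum_const, card_range,
    nsmul_eq_mul, mul_one] at hhead htail
  nlinarith [mul_le_mul_of_nonneg_left hqsum hc0]

theorem orthonormal_toLp_of_dotProduct [Fintype p] {R : ℕ} {v : ℕ → p → ℝ}
    (hv : ∀ i < R, ∀ j < R, v i ⬝ᵥ v j = if i = j then 1 else 0) :
    Orthonormal ℝ (fun i : Fin R => WithLp.toLp 2 (v i)) := by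
  refine orthonormal_iff_ite.mpr fun i j => ?_
  rw [EuclideanSpace.inner_toLp_toLp, star_trivial, hv j j.2 i i.2]
  simp only [eq_comm, Fin.val_inj]

theorem finrank_orthogonal_ker_toEuclideanLin [Fintype m] [Fintype p] [DecidableEq p]
    (B : Matrix m p ℝ) :
    Module.finrank ℝ (LinearMap.ker (toEuclideanLin B))ᗮ = B.rank := by
  have hrank : B.rank = Module.finrank ℝ (LinearMap.range (toEuclideanLin B)) := by
    rw [toEuclideanLin_eq_toLin_orthonormal]
    exact rank_eq_finrank_range_toLin B _ _
  have h := (LinearMap.ker (toEuclideanLin B)).finrank_add_finrank_orthogonal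
  rw [← (toEuclideanLin B).finrank_range_add_finrank_ker] at h
  omega

theorem toLp_row_mem_orthogonal_ker_toEuclideanLin [Fintype p] [DecidableEq p]
    (B : Matrix m p ℝ) (a : m) :
    WithLp.toLp 2 (B a) ∈ (LinearMap.ker (toEuclideanLin B))ᗮ := by
  refine (Submodule.mem_orthogonal' _ _).mpr fun x hx => ?_
  have := congrFun (congrArg WithLp.ofLp (LinearMap.mem_ker.mp hx)) a
  simpa [EuclideanSpace.inner_eq_star_dotProduct, mulVec, dotProduct_comm] using this

theorem sum_Ico_sq_le_sum_sum_sq_sub_of_rank_le [Fintype m] [Fintype p]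
    [DecidableEq p] {R r : ℕ} (hrR : r ≤ R) {σ : ℕ → ℝ} {u : ℕ → m → ℝ} {v : ℕ → p → ℝ}
    (hσ : ∀ i j, i ≤ j → j < R → σ j ^ 2 ≤ σ i ^ 2)
    (hu : ∀ i < R, ∀ j < R, u i ⬝ᵥ u j = if i = j then 1 else 0)
    (hv : ∀ i < R, ∀ j < R, v i ⬝ᵥ v j = if i = j then 1 else 0)
    {A : Matrix m p ℝ} (hA : A = ∑ i ∈ range R, σ i • vecMulVec (u i) (v i))
    {B : Matrix m p ℝ} (hB : B.rank ≤ r) :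
    ∑ i ∈ Ico r R, σ i ^ 2 ≤ ∑ a, ∑ b, (A a b - B a b) ^ 2 := by
  set K := LinearMap.ker (toEuclideanLin B)
  let y : ℕ → EuclideanSpace ℝ p := fun i => WithLp.toLp 2 (v i)
  have hy : ∀ i < R, ‖K.starProjection (y i)‖ ^ 2 = 1 - ‖Kᗮ.starProjection (y i)‖ ^ 2 :=
    fun i hi => by
      rw [eq_sub_iff_add_eq, ← K.norm_sq_eq_add_norm_sq_starProjection,
        (orthonormal_toLp_of_dotProduct hv).1 ⟨i, hi⟩, one_pow]
  have hQ1 : ∀ i < R, ‖Kᗮ.starProjection (y i)‖ ^ 2 ≤ 1 := fun i hi => by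
    linarith [hy i hi, sq_nonneg ‖K.starProjection (y i)‖]
  have hrow : ∀ a, K.starProjection (WithLp.toLp 2 ((A - B) a))
      = ∑ i ∈ range R, (σ i * u i a) • K.starProjection (y i) := fun a => by
    rw [show (A - B) a = A a - B a from rfl, WithLp.toLp_sub, map_sub,
      K.starProjection_apply_eq_zero_iff.mpr (toLp_row_mem_orthogonal_ker_toEuclideanLin B a),
      sub_zero, hA, toLp_sum_smul_vecMulVec_apply, map_sum]
    simp only [map_smul, y]
  have hQ : ∑ i ∈ range R, ‖Kᗮ.starProjection (y i)‖ ^ 2 ≤ r := by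
    rw [sum_range (fun i => ‖Kᗮ.starProjection (y i)‖ ^ 2)]
    refine ((orthonormal_toLp_of_dotProduct hv).sum_norm_sq_starProjection_le_finrank Kᗮ).trans ?_
    rw [finrank_orthogonal_ker_toEuclideanLin]
    exact_mod_cast hB
  calc ∑ i ∈ Ico r R, σ i ^ 2
      = ∑ i ∈ range R, σ i ^ 2 - ∑ i ∈ range r, σ i ^ 2 := by
        rw [← sum_range_add_sum_Ico _ hrR, add_sub_cancel_left]
    _ ≤ ∑ i ∈ range R, σ i ^ 2 - ∑ i ∈ range R, σ i ^ 2 * ‖Kᗮ.starProjection (y i)‖ ^ 2 :=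
        sub_le_sub_left (sum_mul_le_sum_range_of_antitone hrR hσ (fun i => sq_nonneg _)
          (fun i => sq_nonneg _) (fun i hi => hQ1 i (hi.trans_le hrR)) hQ) _
    _ = ∑ i ∈ range R, σ i ^ 2 * ‖K.starProjection (y i)‖ ^ 2 := by
        rw [← sum_sub_distrib]
        refine sum_congr rfl fun i hi => ?_
        rw [hy i (mem_range.mp hi)]
        ring
    _ = ∑ a, ‖K.starProjection (WithLp.toLp 2 ((A - B) a))‖ ^ 2 := by
        simp only [hrow]
        exact (sum_norm_sq_sum_smul_of_orthonormal hu subset_rfl σ _).symm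
    _ ≤ ∑ a, ‖WithLp.toLp 2 ((A - B) a)‖ ^ 2 :=
        sum_le_sum fun a _ =>
          pow_le_pow_left₀ (norm_nonneg _) (K.norm_starProjection_apply_le _) 2
    _ = ∑ a, ∑ b, (A a b - B a b) ^ 2 := (sum_sum_sq_eq_sum_norm_sq_toLp (A - B)).symm

theorem sum_sum_sq_sub_truncation_eq [Fintype m] [Fintype p] {R r : ℕ} (hrR : r ≤ R)
    {σ : ℕ → ℝ} {u : ℕ → m → ℝ} {v : ℕ → p → ℝ}
    (hu : ∀ i < R, ∀ j < R, u i ⬝ᵥ u j = if i = j then 1 else 0)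
    (hv : ∀ i < R, ∀ j < R, v i ⬝ᵥ v j = if i = j then 1 else 0)
    {A : Matrix m p ℝ} (hA : A = ∑ i ∈ range R, σ i • vecMulVec (u i) (v i)) :
    ∑ a, ∑ b, (A a b - (∑ i ∈ range r, σ i • vecMulVec (u i) (v i)) a b) ^ 2
      = ∑ i ∈ Ico r R, σ i ^ 2 := by
  have htail : A - ∑ i ∈ range r, σ i • vecMulVec (u i) (v i)
      = ∑ i ∈ Ico r R, σ i • vecMulVec (u i) (v i) := by
    rw [hA, ← sum_range_add_sum_Ico _ hrR, add_sub_cancel_left]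
  have hIco : Ico r R ⊆ range R := fun i hi => mem_range.mpr (mem_Ico.mp hi).2
  simp only [← Matrix.sub_apply, htail, sum_sum_sq_eq_sum_norm_sq_toLp,
    toLp_sum_smul_vecMulVec_apply, sum_norm_sq_sum_smul_of_orthonormal hu hIco]
  refine sum_congr rfl fun i hi => ?_
  rw [(orthonormal_toLp_of_dotProduct hv).1 ⟨i, mem_range.mp (hIco hi)⟩, one_pow, mul_one]

end

/-- Critical points of `B ↦ ‖A − B‖_F²` on the fixed-rank manifold
`M_r = {B : rank B = r}`.  Let `A = ∑_{i<R} σᵢ uᵢ vᵢᵀ` be an SVD of `A` with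
distinct nonzero singular values `σ₀ > σ₁ > ⋯ > σ_{R-1} > 0` and orthonormal
families `u`, `v`.  Then for every `r`-element subset `S ⊆ {0,…,R−1}` the
truncation `X_S = ∑_{i∈S} σᵢ uᵢ vᵢᵀ` is a critical point of the restriction:
along any differentiable curve `γ` in `M_r` through `X_S`, the derivative of
`t ↦ ‖A − γ(t)‖_F²` at `t = 0` vanishes.  Moreover, among all matrices of rank
at most `r` (the closure of `M_r`), the squared residual is globally minimized
by the choice `S = {0,…,r−1}` of the `r` largest singular values. -/
theorem stmt_17 (n N R r : ℕ) (A : Matrix (Fin n) (Fin N) ℝ)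
    (σ : ℕ → ℝ) (u : ℕ → Fin n → ℝ) (v : ℕ → Fin N → ℝ)
    (hσpos : ∀ i < R, 0 < σ i)
    (hσdistinct : ∀ i j, i < j → j < R → σ j < σ i)
    (hu : ∀ i < R, ∀ j < R, ∑ a, u i a * u j a = if i = j then 1 else 0)
    (hv : ∀ i < R, ∀ j < R, ∑ b, v i b * v j b = if i = j then 1 else 0)
    (hA : A = ∑ i ∈ Finset.range R, σ i • Matrix.of (fun a b => u i a * v i b))
    (hrR : r ≤ R) :
    (∀ S : Finset ℕ, S ⊆ Finset.range R → S.card = r →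
      ∀ (γ : ℝ → Matrix (Fin n) (Fin N) ℝ) (d : Matrix (Fin n) (Fin N) ℝ),
        (∀ a b, HasDerivAt (fun t => γ t a b) (d a b) 0) →
        γ 0 = ∑ i ∈ S, σ i • Matrix.of (fun a b => u i a * v i b) →
        (∀ t, (γ t).rank = r) →
        HasDerivAt (fun t => ∑ a, ∑ b, (A a b - γ t a b) ^ 2) 0 0) ∧
    (∀ B : Matrix (Fin n) (Fin N) ℝ, B.rank ≤ r →
      ∑ a, ∑ b, (A a b - (∑ i ∈ Finset.range r,
          σ i • Matrix.of (fun a b => u i a * v i b)) a b) ^ 2 ≤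
        ∑ a, ∑ b, (A a b - B a b) ^ 2) := by
  refine ⟨fun S hS hcard γ d hd hγ₀ hrank => ?_, fun B hB => ?_⟩
  · exact hasDerivAt_residual_of_rank_le hu hv hA hS
      (fun i hi => (hσpos i (mem_range.mp (hS hi))).ne') hd hγ₀
      fun t => (hrank t).trans hcard.symm |>.le
  · have hσsq : ∀ i j, i ≤ j → j < R → σ j ^ 2 ≤ σ i ^ 2 := by
      intro i j hij hj
      rcases hij.eq_or_lt with rfl | hlt
      · exact le_rfl
      · exact pow_le_pow_left₀ (hσpos j hj).le (hσdistinct i j hlt hj).le 2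
    exact (sum_sum_sq_sub_truncation_eq hrR hu hv hA).trans_le
      (sum_Ico_sq_le_sum_sum_sq_sub_of_rank_le hrR hσsq hu hv hA hB)
end
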